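/- Any one-point extension of a Ramsey algebra is a Ramsey algebra: if (A, F) is Ramsey, α ∉ A, and F' is any family of operations on A ∪ {α} such that each f' ∈ F' restricted to A equals some f ∈ F (bijectively), then (A ∪ {α}, F') is a Ramsey algebra. -/

import Mathlib

namespace RamseyAlg

/- Orderly-term syntax trees over an operation-index type `ι`:
`leaf` is the identity (a single variable), `node g f` applies the basic
operation `g` to the results of the trees in the forest `f`. -/
mutual
  inductive OTree (ι : Type) : Type
    | leaf : OTree ι
    | node : ι → OForest ι → OTree ι
  inductive OForest (ι : Type) : Type
    | nil : OForest ι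
    | cons : OTree ι → OForest ι → OForest ι
end

def OForest.length {ι : Type} : OForest ι → ℕ
  | .nil => 0
  | .cons _ f => f.length + 1

/- Well-formedness: each node applies a `k`-ary basic operation to exactly
`k` subtrees, where `ar` gives the arities. -/
mutual
  def OTree.WF {ι : Type} (ar : ι → ℕ) : OTree ι → Prop
    | .leaf => True
    | .node g f => OForest.length f = ar g ∧ OForest.WF ar f
  def OForest.WF {ι : Type} (ar : ι → ℕ) : OForest ι → Prop
    | .nil => True
    | .cons t f => OTree.WF ar t ∧ OForest.WF ar f
end

/- Evaluation of an orderly term on an input list: the variables of the term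
consume an initial segment of the list, in order, each exactly once; what
remains of the list is returned alongside the value. -/
mutual
  def OTree.evalAux {ι A : Type} (F : ι → List A → A) :
      OTree ι → List A → Option (A × List A)
    | .leaf, [] => none
    | .leaf, a :: rest => some (a, rest)
    | .node g f, l =>
      match OForest.evalAux F f l with
      | none => none
      | some (rs, rest) => some (F g rs, rest)
  def OForest.evalAux {ι A : Type} (F : ι → List A → A) :
      OForest ι → List A → Option (List A × List A)
    | .nil, l => some ([], l)
    | .cons t f, l =>
      match OTree.evalAux F t l with
      | none => none
      | some (r, rest) =>
        match OForest.evalAux F f rest with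
        | none => none
        | some (rs, rest') => some (r :: rs, rest')
end

/- The value of the orderly term `t` on the finite sequence `l`, defined
exactly when the variables of `t` consume all of `l`. -/
def OTree.eval {ι A : Type} (F : ι → List A → A) (t : OTree ι) (l : List A) :
    Option A :=
  match OTree.evalAux F t l with
  | some (a, []) => some a
  | _ => none

/- `Reduction ar F a b` : `a` is a reduction of `b` with respect to `F`, i.e.
there are well-formed orderly terms `t j` applied to consecutive disjoint
finite subsequences of `b` (extracted by the strictly monotone `e`, in blocks
of lengths `len j`) producing the terms of `a` in order. -/
def Reduction {ι A : Type} (ar : ι → ℕ) (F : ι → List A → A)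
    (a b : ℕ → A) : Prop :=
  ∃ (t : ℕ → OTree ι) (len : ℕ → ℕ) (e : ℕ → ℕ),
    StrictMono e ∧ (∀ j, (t j).WF ar) ∧
    ∀ j, (t j).eval F ((List.range (len j)).map
        (fun i => b (e ((∑ m ∈ Finset.range j, len m) + i)))) = some (a j)

/- `FR ar F b` : the set of values of orderly terms over `F` applied to
finite subsequences of `b`. -/
def FR {ι A : Type} (ar : ι → ℕ) (F : ι → List A → A) (b : ℕ → A) : Set A :=
  { x | ∃ (t : OTree ι) (l : List ℕ), t.WF ar ∧ l.Chain' (· < ·) ∧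
      t.eval F (l.map b) = some x }

/- `(A, F)` is a Ramsey algebra: every infinite sequence has, for every
`X ⊆ A`, a reduction homogeneous for `X`. -/
def RamseyAlgebra {ι A : Type} (ar : ι → ℕ) (F : ι → List A → A) : Prop :=
  ∀ (b : ℕ → A) (X : Set A), ∃ a : ℕ → A,
    Reduction ar F a b ∧ (FR ar F a ⊆ X ∨ FR ar F a ∩ X = ∅)

end RamseyAlg

/-!
Let `b` be a sequence in `Option A = A ∪ {α}`, with `α = none`, and `X` a colour class.
If `α` occurs only finitely often in `b`, a tail of `b` lies in `A`; a homogeneous reduction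
of that tail in `(A, F)` is still a reduction, and still homogeneous, in the extension,
because `F'` agrees with `F` on `A`. Otherwise `b` has a constant subsequence `α, α, …`.
If some orderly term `u` sends a constant tuple `(α, …, α)` to a point `a₀ ∈ A`, take a
homogeneous reduction of the constant sequence `a₀, a₀, …` in `(A, F)` and substitute `u`
for every variable of its terms: the result is a reduction of `α, α, …`. If no orderly term
does so, the constant sequence `α, α, …` is itself homogeneous, since all its finite
reductions equal `α`.
-/

namespace RamseyAlg

variable {ι A B : Type}

@[simp] theorem OTree.evalAux_leaf_nil (F : ι → List A → A) :
    OTree.evalAux F .leaf ([] : List A) = none := rfl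

@[simp] theorem OTree.evalAux_leaf_cons (F : ι → List A → A) (a : A) (l : List A) :
    OTree.evalAux F .leaf (a :: l) = some (a, l) := rfl

@[simp] theorem OTree.evalAux_node (F : ι → List A → A) (g : ι) (f : OForest ι) (l : List A) :
    OTree.evalAux F (.node g f) l = (OForest.evalAux F f l).map fun p => (F g p.1, p.2) := by
  cases h : OForest.evalAux F f l <;> simp [OTree.evalAux, h]

@[simp] theorem OForest.evalAux_nil (F : ι → List A → A) (l : List A) :
    OForest.evalAux F .nil l = some ([], l) := rfl

@[simp] theorem OForest.evalAux_cons (F : ι → List A → A) (t : OTree ι) (f : OForest ι)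
    (l : List A) :
    OForest.evalAux F (.cons t f) l = (OTree.evalAux F t l).bind fun p =>
      (OForest.evalAux F f p.2).map fun q => (p.1 :: q.1, q.2) := by
  cases ht : OTree.evalAux F t l with
  | none => simp [OForest.evalAux, ht]
  | some p => cases hf : OForest.evalAux F f p.2 <;> simp [OForest.evalAux, ht, hf]

theorem OTree.eval_eq_some_iff (F : ι → List A → A) (t : OTree ι) (l : List A) (x : A) :
    t.eval F l = some x ↔ t.evalAux F l = some (x, []) := by
  unfold OTree.eval
  rcases t.evalAux F l with _ | ⟨y, _ | ⟨_, _⟩⟩ <;> simp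

theorem OForest.length_evalAux (F : ι → List A → A) :
    ∀ (f : OForest ι) (l rs rest : List A), f.evalAux F l = some (rs, rest) → rs.length = f.length
  | .nil, _, _, _, h => by simp_all [OForest.length]
  | .cons t f, l, rs, rest, h => by
    simp only [OForest.evalAux_cons, Option.bind_eq_some_iff, Option.map_eq_some_iff] at h
    obtain ⟨⟨x, rest₁⟩, -, ⟨rs₂, rest₂⟩, hf, ⟨⟩⟩ := h
    simp [OForest.length, OForest.length_evalAux F f rest₁ rs₂ rest₂ hf]

mutual
  theorem OTree.evalAux_suffix (F : ι → List A → A) :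
      ∀ (t : OTree ι) (l : List A) (x : A) (rest : List A),
        t.evalAux F l = some (x, rest) → rest <:+ l
    | .leaf, [], _, _, h => by simp at h
    | .leaf, a :: l, _, _, h => by
      obtain ⟨-, rfl⟩ := Prod.mk.inj (Option.some.inj h)
      exact List.suffix_cons a l
    | .node g f, l, x, rest, h => by
      simp only [OTree.evalAux_node, Option.map_eq_some_iff] at h
      obtain ⟨⟨rs, rest⟩, hf, ⟨⟩⟩ := h
      exact OForest.evalAux_suffix F f l rs rest hf
  theorem OForest.evalAux_suffix (F : ι → List A → A) :
      ∀ (f : OForest ι) (l rs rest : List A), f.evalAux F l = some (rs, rest) → rest <:+ l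
    | .nil, _, _, _, h => by simp_all
    | .cons t f, l, rs, rest, h => by
      simp only [OForest.evalAux_cons, Option.bind_eq_some_iff, Option.map_eq_some_iff] at h
      obtain ⟨⟨x, rest₁⟩, ht, ⟨rs₂, rest₂⟩, hf, ⟨⟩⟩ := h
      exact (OForest.evalAux_suffix F f rest₁ rs₂ rest₂ hf).trans
        (OTree.evalAux_suffix F t l x rest₁ ht)
end

mutual
  theorem OTree.evalAux_append (F : ι → List A → A) :
      ∀ (t : OTree ι) (l : List A) (x : A) (rest r : List A),
        t.evalAux F l = some (x, rest) → t.evalAux F (l ++ r) = some (x, rest ++ r)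
    | .leaf, [], _, _, _, h => by simp at h
    | .leaf, a :: l, _, _, r, h => by
      obtain ⟨rfl, rfl⟩ := Prod.mk.inj (Option.some.inj h)
      rfl
    | .node g f, l, x, rest, r, h => by
      simp only [OTree.evalAux_node, Option.map_eq_some_iff] at h ⊢
      obtain ⟨⟨rs, rest⟩, hf, ⟨⟩⟩ := h
      exact ⟨_, OForest.evalAux_append F f l rs rest r hf, rfl⟩
  theorem OForest.evalAux_append (F : ι → List A → A) :
      ∀ (f : OForest ι) (l rs rest r : List A),
        f.evalAux F l = some (rs, rest) → f.evalAux F (l ++ r) = some (rs, rest ++ r)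
    | .nil, _, _, _, _, h => by simp_all
    | .cons t f, l, rs, rest, r, h => by
      simp only [OForest.evalAux_cons, Option.bind_eq_some_iff, Option.map_eq_some_iff] at h ⊢
      obtain ⟨⟨x, rest₁⟩, ht, ⟨rs₂, rest₂⟩, hf, ⟨⟩⟩ := h
      exact ⟨_, OTree.evalAux_append F t l x rest₁ r ht,
        _, OForest.evalAux_append F f rest₁ rs₂ rest₂ r hf, rfl⟩
end

section Hom

def IsOpHom (ar : ι → ℕ) (F : ι → List A → A) (F' : ι → List B → B) (φ : A → B) : Prop :=
  ∀ i (l : List A), l.length = ar i → F' i (l.map φ) = φ (F i l)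

variable {ar : ι → ℕ} {F : ι → List A → A} {F' : ι → List B → B} {φ : A → B}

mutual
  theorem OTree.evalAux_map (hφ : IsOpHom ar F F' φ) :
      ∀ t : OTree ι, t.WF ar → ∀ l : List A,
        t.evalAux F' (l.map φ) = (t.evalAux F l).map fun p => (φ p.1, p.2.map φ)
    | .leaf, _, l => by cases l <;> rfl
    | .node g f, hw, l => by
      rw [OTree.evalAux_node, OTree.evalAux_node, OForest.evalAux_map hφ f hw.2 l]
      cases hf : f.evalAux F l with
      | none => rfl
      | some p =>
        have hlen : p.1.length = ar g := (OForest.length_evalAux F f l p.1 p.2 hf).trans hw.1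
        simp [hφ g p.1 hlen]
  theorem OForest.evalAux_map (hφ : IsOpHom ar F F' φ) :
      ∀ f : OForest ι, f.WF ar → ∀ l : List A,
        f.evalAux F' (l.map φ) = (f.evalAux F l).map fun p => (p.1.map φ, p.2.map φ)
    | .nil, _, l => rfl
    | .cons t f, hw, l => by
      rw [OForest.evalAux_cons, OForest.evalAux_cons, OTree.evalAux_map hφ t hw.1 l]
      cases t.evalAux F l with
      | none => rfl
      | some p =>
        simp only [Option.map_some, Option.bind_some]
        rw [OForest.evalAux_map hφ f hw.2 p.2]
        cases f.evalAux F p.2 <;> rfl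
end

theorem OTree.eval_map (hφ : IsOpHom ar F F' φ) {t : OTree ι} (hw : t.WF ar) (l : List A) :
    t.eval F' (l.map φ) = (t.eval F l).map φ := by
  unfold OTree.eval
  rw [OTree.evalAux_map hφ t hw l]
  rcases t.evalAux F l with _ | ⟨y, _ | ⟨_, _⟩⟩ <;> rfl

theorem FR_comp_subset_image (hφ : IsOpHom ar F F' φ) (a : ℕ → A) :
    FR ar F' (φ ∘ a) ⊆ φ '' FR ar F a := by
  rintro x ⟨t, l, hw, hc, he⟩
  rw [← List.map_map, OTree.eval_map hφ hw] at he
  obtain ⟨y, hy, rfl⟩ := Option.map_eq_some_iff.mp he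
  exact ⟨y, ⟨t, l, hw, hc, hy⟩, rfl⟩

theorem Reduction.map (hφ : IsOpHom ar F F' φ) {a b : ℕ → A} (h : Reduction ar F a b) :
    Reduction ar F' (φ ∘ a) (φ ∘ b) := by
  obtain ⟨t, len, e, he, hw, hev⟩ := h
  refine ⟨t, len, e, he, hw, fun j => ?_⟩
  have := OTree.eval_map hφ (hw j)
    ((List.range (len j)).map fun i => b (e (∑ m ∈ Finset.range j, len m + i)))
  rwa [List.map_map, hev j] at this

end Hom

mutual
  def OTree.subst : OTree ι → OTree ι → OTree ι
    | .leaf, u => u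
    | .node g f, u => .node g (OForest.subst f u)
  def OForest.subst : OForest ι → OTree ι → OForest ι
    | .nil, _ => .nil
    | .cons t f, u => .cons (OTree.subst t u) (OForest.subst f u)
end

theorem OForest.length_subst : ∀ (f : OForest ι) (u : OTree ι), (f.subst u).length = f.length
  | .nil, _ => rfl
  | .cons _ f, u => congrArg (· + 1) (OForest.length_subst f u)

mutual
  theorem OTree.WF_subst {ar : ι → ℕ} {u : OTree ι} (hu : u.WF ar) :
      ∀ t : OTree ι, t.WF ar → (t.subst u).WF ar
    | .leaf, _ => hu
    | .node _ f, hw => ⟨(OForest.length_subst f u).trans hw.1, OForest.WF_subst hu f hw.2⟩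
  theorem OForest.WF_subst {ar : ι → ℕ} {u : OTree ι} (hu : u.WF ar) :
      ∀ f : OForest ι, f.WF ar → (f.subst u).WF ar
    | .nil, _ => trivial
    | .cons t f, hw => ⟨OTree.WF_subst hu t hw.1, OForest.WF_subst hu f hw.2⟩
end

section Subst

variable {F : ι → List A → A} {u : OTree ι} {β : A → List A}

mutual
  theorem OTree.evalAux_subst :
      ∀ (t : OTree ι) (l : List A) (v : A) (rest : List A), t.evalAux F l = some (v, rest) →
        (∀ x ∈ l, ∀ r, u.evalAux F (β x ++ r) = some (x, r)) →
        ∀ r, (t.subst u).evalAux F (l.flatMap β ++ r) = some (v, rest.flatMap β ++ r)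
    | .leaf, [], _, _, h, _, _ => by simp at h
    | .leaf, x :: l, _, _, h, hu, r => by
      obtain ⟨rfl, rfl⟩ := Prod.mk.inj (Option.some.inj h)
      rw [List.flatMap_cons, List.append_assoc]
      exact hu x List.mem_cons_self _
    | .node g f, l, v, rest, h, hu, r => by
      simp only [OTree.evalAux_node, Option.map_eq_some_iff] at h
      obtain ⟨⟨rs, rest⟩, hf, ⟨⟩⟩ := h
      rw [OTree.subst, OTree.evalAux_node, OForest.evalAux_subst f l rs rest hf hu r]
      rfl
  theorem OForest.evalAux_subst :
      ∀ (f : OForest ι) (l rs rest : List A), f.evalAux F l = some (rs, rest) →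
        (∀ x ∈ l, ∀ r, u.evalAux F (β x ++ r) = some (x, r)) →
        ∀ r, (f.subst u).evalAux F (l.flatMap β ++ r) = some (rs, rest.flatMap β ++ r)
    | .nil, _, _, _, h, _, _ => by simp_all [OForest.subst]
    | .cons t f, l, rs, rest, h, hu, r => by
      simp only [OForest.evalAux_cons, Option.bind_eq_some_iff, Option.map_eq_some_iff] at h
      obtain ⟨⟨x, rest₁⟩, ht, ⟨rs₂, rest₂⟩, hf, ⟨⟩⟩ := h
      have hu₁ : ∀ x ∈ rest₁, ∀ r, u.evalAux F (β x ++ r) = some (x, r) :=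
        fun x hx => hu x ((OTree.evalAux_suffix F t l _ rest₁ ht).subset hx)
      rw [OForest.subst, OForest.evalAux_cons, OTree.evalAux_subst t l x rest₁ ht hu r,
        Option.bind_some, OForest.evalAux_subst f rest₁ rs₂ rest₂ hf hu₁ r]
      rfl
end

theorem OTree.eval_subst_replicate {t : OTree ι} {k n : ℕ} {x y v : A}
    (ht : t.eval F (List.replicate k x) = some v) (hu : u.eval F (List.replicate n y) = some x) :
    (t.subst u).eval F (List.replicate (k * n) y) = some v := by
  rw [OTree.eval_eq_some_iff] at ht hu ⊢
  have hu' : ∀ r, u.evalAux F (List.replicate n y ++ r) = some (x, r) :=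
    fun r => OTree.evalAux_append F u _ x [] r hu
  have := OTree.evalAux_subst (β := fun _ => List.replicate n y) t _ v [] ht
    (fun x' hx' => (List.eq_of_mem_replicate hx').symm ▸ hu') []
  rwa [List.flatMap_replicate, List.flatten_replicate_replicate, List.append_nil] at this

end Subst

section Reduction

variable {ar : ι → ℕ} {F : ι → List A → A}

theorem Reduction.refl (a : ℕ → A) : Reduction ar F a a :=
  ⟨fun _ => .leaf, fun _ => 1, id, strictMono_id, fun _ => trivial, fun j => by
    simp [OTree.eval_eq_some_iff]⟩

theorem Reduction.of_subsequence {a b c : ℕ → A} {g : ℕ → ℕ} (hg : StrictMono g)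
    (hbg : ∀ n, b (g n) = c n) (h : Reduction ar F a c) : Reduction ar F a b := by
  obtain ⟨t, len, e, he, hw, hev⟩ := h
  exact ⟨t, len, g ∘ e, hg.comp he, hw, fun j => by simpa only [Function.comp, hbg] using hev j⟩

theorem Reduction.of_const {a : ℕ → A} {x y : A} {u : OTree ι} {n : ℕ} (huw : u.WF ar)
    (hu : u.eval F (List.replicate n y) = some x) (h : Reduction ar F a fun _ => x) :
    Reduction ar F a fun _ => y := by
  obtain ⟨t, len, e, -, hw, hev⟩ := h
  refine ⟨fun j => (t j).subst u, fun j => len j * n, id, strictMono_id,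
    fun j => OTree.WF_subst huw _ (hw j), fun j => ?_⟩
  have ht := hev j
  rw [List.map_const', List.length_range] at ht ⊢
  exact OTree.eval_subst_replicate ht hu

theorem FR_const_subset {y : A}
    (hy : ∀ (t : OTree ι) (n : ℕ) (x : A), t.WF ar → t.eval F (List.replicate n y) = some x →
      x = y) :
    FR ar F (fun _ => y) ⊆ {y} := by
  rintro x ⟨t, l, hw, -, he⟩
  rw [List.map_const'] at he
  exact hy t _ x hw he

end Reduction

theorem homogeneous_of_subset_image {S : Set B} {T : Set A} {φ : A → B} {X : Set B}
    (hS : S ⊆ φ '' T) (hT : T ⊆ φ ⁻¹' X ∨ T ∩ φ ⁻¹' X = ∅) : S ⊆ X ∨ S ∩ X = ∅ := by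
  refine hT.imp (fun hT => ?_) fun hT => ?_
  · rintro _ hx
    obtain ⟨y, hy, rfl⟩ := hS hx
    exact hT hy
  · refine Set.eq_empty_of_forall_notMem fun _ ⟨hx, hxX⟩ => ?_
    obtain ⟨y, hy, rfl⟩ := hS hx
    exact hT.subset ⟨hy, hxX⟩

theorem homogeneous_of_subset_singleton {S : Set A} {y : A} (hS : S ⊆ {y}) (X : Set A) :
    S ⊆ X ∨ S ∩ X = ∅ := by
  by_cases hy : y ∈ X
  · exact .inl fun x hx => (hS hx : x = y) ▸ hy
  · exact .inr <| Set.eq_empty_of_forall_notMem fun x ⟨hx, hxX⟩ => hy ((hS hx : x = y) ▸ hxX)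

end RamseyAlg

open RamseyAlg in
/-- Any one-point extension of a Ramsey algebra is Ramsey: extend the
universe `A` by one new point (modelled by `Option A`, with `none` the new point
`α`), and let each operation `F' i` agree with `F i` on tuples from `A`, being
arbitrary on tuples involving `α`. If `(A, F)` is Ramsey then so is `(A ∪ {α}, F')`. -/
theorem stmt17 (ι A : Type) (ar : ι → ℕ) (F : ι → List A → A)
    (F' : ι → List (Option A) → Option A)
    (hext : ∀ i (l : List A), l.length = ar i → F' i (l.map some) = some (F i l))
    (h : RamseyAlgebra ar F) : RamseyAlgebra ar F' := by
  intro b X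
  have hsome : IsOpHom ar F F' some := hext
  by_cases hα : ∃ᶠ n in Filter.atTop, b n = none
  · obtain ⟨e, he, hbe⟩ := Filter.extraction_of_frequently_atTop hα
    by_cases hconst : ∀ (t : OTree ι) (n : ℕ) (x : Option A), t.WF ar →
        t.eval F' (List.replicate n none) = some x → x = none
    · exact ⟨fun _ => none, (Reduction.refl _).of_subsequence he hbe,
        homogeneous_of_subset_singleton (FR_const_subset hconst) X⟩
    push Not at hconst
    obtain ⟨u, n, x, huw, hu, hx⟩ := hconst
    obtain ⟨a₀, rfl⟩ := Option.ne_none_iff_exists'.mp hx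
    obtain ⟨a, hred, hhom⟩ := h (fun _ => a₀) (some ⁻¹' X)
    exact ⟨some ∘ a, ((hred.map hsome).of_const huw hu).of_subsequence he hbe,
      homogeneous_of_subset_image (FR_comp_subset_image hsome a) hhom⟩
  · obtain ⟨N, hN⟩ := Filter.eventually_atTop.mp (Filter.not_frequently.mp hα)
    choose c hc using fun n => Option.ne_none_iff_exists'.mp (hN (N + n) le_self_add)
    obtain ⟨a, hred, hhom⟩ := h c (some ⁻¹' X)
    exact ⟨some ∘ a, (hred.map hsome).of_subsequence (strictMono_id.const_add N) hc,
      homogeneous_of_subset_image (FR_comp_subset_image hsome a) hhom⟩
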